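/- For an integer k ≥ 2, define g_k(x) = (1/2)·(1 − (1 − k x²)/(2 − x)²) and h_k(x) = (1/2)·(1 − (1 − (1 − x)²/k)/(2 − x)²). Then min over x ∈ [0, 1] of max{g_k(x), h_k(x)} equals g_k(1/(k+1)); in particular, for every x ∈ [0, 1], max{g_k(x), h_k(x)} ≥ g_k(1/(k+1)). -/

import Mathlib

/-!
`g_k` is increasing on `[1/(2k), 1]`, which contains `[1/(k+1), 1]`, and `h_k` is decreasing on
`(-∞, 1]`; at `a = 1/(k+1)` one has `1 - a = k a`, so `k a² = (1 - a)²/k` and `g_k a = h_k a`.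
Hence `max (g_k x) (h_k x)` is at least `h_k a` left of `a` and at least `g_k a` right of it.
-/

/-- The function `g_k(x) = (1/2)(1 - (1 - k x²)/(2 - x)²)`. -/
noncomputable def gfun (k : ℕ) (x : ℝ) : ℝ :=
  (1 / 2) * (1 - (1 - (k : ℝ) * x ^ 2) / (2 - x) ^ 2)

/-- The function `h_k(x) = (1/2)(1 - (1 - (1 - x)²/k)/(2 - x)²)`. -/
noncomputable def hfun (k : ℕ) (x : ℝ) : ℝ :=
  (1 / 2) * (1 - (1 - (1 - x) ^ 2 / (k : ℝ)) / (2 - x) ^ 2)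

theorem gfun_monotoneOn {k : ℕ} (hk : k ≠ 0) : MonotoneOn (gfun k) (Set.Icc (1 / (2 * k)) 1) := by
  rintro x ⟨hx, hx1⟩ y ⟨hy, hy1⟩ hxy
  have hc : (1 : ℝ) ≤ k := by exact_mod_cast Nat.one_le_iff_ne_zero.mpr hk
  set c : ℝ := (k : ℝ)
  have h2c : (0 : ℝ) < 2 * c := by positivity
  rw [div_le_iff₀ h2c] at hx hy
  -- the numerator of `g y - g x` is `(y - x) * Q x y` with `Q` bilinear and `Q a a = 0` at `a = 1/(2c)`
  have hQ : 0 ≤ (x + y) * (1 + 4 * c) - 4 - 4 * c * x * y := by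
    nlinarith [mul_nonneg (by linarith : 0 ≤ x * (2 * c) - 1) (by nlinarith : 0 ≤ 1 + 4 * c - 4 * c * y),
      mul_nonneg (by linarith : 0 ≤ y * (2 * c) - 1) (by linarith : 0 ≤ 4 * c - 1)]
  unfold gfun
  have key : (1 - c * y ^ 2) / (2 - y) ^ 2 ≤ (1 - c * x ^ 2) / (2 - x) ^ 2 := by
    rw [div_le_div_iff₀ (by nlinarith) (by nlinarith)]
    nlinarith [mul_nonneg (sub_nonneg.2 hxy) hQ]
  linarith

theorem hfun_antitoneOn {k : ℕ} (hk : k ≠ 0) : AntitoneOn (hfun k) (Set.Iic 1) := by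
  rintro x hx y hy hxy
  simp only [Set.mem_Iic] at hx hy
  have hc : (0 : ℝ) < k := by exact_mod_cast Nat.pos_of_ne_zero hk
  unfold hfun
  have key : (1 - (1 - x) ^ 2 / k) / (2 - x) ^ 2 ≤ (1 - (1 - y) ^ 2 / k) / (2 - y) ^ 2 := by
    rw [div_le_div_iff₀ (by nlinarith) (by nlinarith)]
    field_simp
    -- with `u = 1 - x`, `v = 1 - y` the numerator is `(v - u) (k (2 + u + v) + u + v + 2 u v)`
    have hbracket : 0 ≤ k * (4 - x - y) + (1 - x) + (1 - y) + 2 * (1 - x) * (1 - y) := by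
      nlinarith [mul_nonneg (sub_nonneg.2 hx) (sub_nonneg.2 hy)]
    nlinarith [mul_nonneg (sub_nonneg.2 hxy) hbracket]
  linarith

theorem gfun_eq_hfun_inv_succ (k : ℕ) : gfun k (1 / (k + 1)) = hfun k (1 / (k + 1)) := by
  have h : 1 - 1 / ((k : ℝ) + 1) = k * (1 / (k + 1)) := by field_simp; ring
  -- `(k a)^2 / k = k a^2` also for `k = 0`, since `0 / 0 = 0`
  rw [gfun, hfun, h, mul_pow, sq (k : ℝ), mul_div_right_comm, mul_self_div_self]

theorem stmt15 (k : ℕ) (hk : 2 ≤ k) :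
    IsLeast ((fun x => max (gfun k x) (hfun k x)) '' Set.Icc (0 : ℝ) 1)
      (gfun k (1 / ((k : ℝ) + 1))) ∧
    ∀ x ∈ Set.Icc (0 : ℝ) 1, gfun k (1 / ((k : ℝ) + 1)) ≤ max (gfun k x) (hfun k x) := by
  have hk0 : k ≠ 0 := by omega
  have hk1 : (1 : ℝ) ≤ k := by exact_mod_cast hk.trans' one_le_two
  set a : ℝ := 1 / ((k : ℝ) + 1)
  have ha0 : 0 ≤ a := by positivity
  have ha1 : a ≤ 1 := by rw [div_le_one (by positivity)]; linarith
  have h2k : 1 / (2 * (k : ℝ)) ≤ a := one_div_le_one_div_of_le (by positivity) (by linarith)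
  have lower : ∀ x ∈ Set.Icc (0 : ℝ) 1, gfun k a ≤ max (gfun k x) (hfun k x) := by
    rintro x ⟨hx0, hx1⟩
    rcases le_total x a with hxa | hax
    · rw [gfun_eq_hfun_inv_succ]
      exact (hfun_antitoneOn hk0 hx1 ha1 hxa).trans (le_max_right _ _)
    · exact (gfun_monotoneOn hk0 ⟨h2k, ha1⟩ ⟨h2k.trans hax, hx1⟩ hax).trans (le_max_left _ _)
  refine ⟨⟨⟨a, ⟨ha0, ha1⟩, ?_⟩, ?_⟩, lower⟩
  · dsimp only
    rw [gfun_eq_hfun_inv_succ, max_self]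
  · rintro _ ⟨x, hx, rfl⟩
    exact lower x hx
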